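/- (Doubly robust ATE identity.) Assume β0(X) ≥ β_min almost surely for some constant β_min > 0. Then for every bounded measurable function θ_pre of X, E[ θ_pre(X) + (Y − q0(X) − θ_pre(X)·(T − p0(X)))·(Z − r0(X)) / β0(X) ] = E[θ0(X)]; i.e., the doubly robust quantity recovers the average treatment effect regardless of the preliminary effect estimate θ_pre, provided the remaining nuisances are correct. -/

import Mathlib

/-!
Write `Y - q₀ - θ (T - p₀)` as the IV residual `Y - θ₀ T - f₀`, plus `(θ₀ - θ)(T - p₀)`, plus a
function of `X`. After multiplication by `(Z - r₀) / β₀`, the residual term has mean zero by the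
tower property over `σ(Z, X)`, the last term because `E[Z - r₀ | X] = 0`, and the middle term has
mean `E[θ₀ - θ]` because `E[(T - p₀)(Z - r₀) | X] = β₀`.
-/

open MeasureTheory
open scoped ENNReal

section ConditionalExpectation

variable {Ω : Type*} {m m₀ : MeasurableSpace Ω} {μ : Measure Ω}

theorem integral_mul_eq_integral_mul_of_condExp_ae_eq (hm : m ≤ m₀) [SigmaFinite (μ.trim hm)]
    {g f b : Ω → ℝ} (hg : AEStronglyMeasurable[m] g μ) (hgf : Integrable (g * f) μ)
    (hf : Integrable f μ) (hb : μ[f | m] =ᵐ[μ] b) :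
    ∫ ω, g ω * f ω ∂μ = ∫ ω, g ω * b ω ∂μ :=
  calc ∫ ω, g ω * f ω ∂μ = ∫ ω, (μ[g * f | m]) ω ∂μ := (integral_condExp hm).symm
    _ = ∫ ω, g ω * b ω ∂μ := integral_congr_ae <|
        (condExp_mul_of_aestronglyMeasurable_left hg hgf hf).trans (Filter.EventuallyEq.rfl.mul hb)

theorem integral_mul_eq_zero_of_condExp_ae_eq_zero (hm : m ≤ m₀) [SigmaFinite (μ.trim hm)]
    {g f : Ω → ℝ} (hg : AEStronglyMeasurable[m] g μ) (hgf : Integrable (g * f) μ)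
    (hf : Integrable f μ) (h : μ[f | m] =ᵐ[μ] 0) : ∫ ω, g ω * f ω ∂μ = 0 := by
  simp [integral_mul_eq_integral_mul_of_condExp_ae_eq hm hg hgf hf h]

theorem condExp_sub_ae_eq_zero_of_condExp_ae_eq (hm : m ≤ m₀) [SigmaFinite (μ.trim hm)]
    {f g : Ω → ℝ} (hf : Integrable f μ) (hg : Integrable g μ) (hgm : StronglyMeasurable[m] g)
    (h : μ[f | m] =ᵐ[μ] g) : μ[f - g | m] =ᵐ[μ] 0 := by
  filter_upwards [condExp_sub hf hg m, h] with ω hsub hω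
  simp [hsub, hω, condExp_of_stronglyMeasurable hm hgm hg]

end ConditionalExpectation

section LInfinity

variable {Ω : Type*} [MeasurableSpace Ω] {μ : Measure Ω}

theorem memLp_top_of_abs_le {f : Ω → ℝ} (hf : AEStronglyMeasurable f μ)
    (h : ∃ C, ∀ ω, |f ω| ≤ C) : MemLp f ∞ μ :=
  let ⟨C, hC⟩ := h
  memLp_top_of_bound hf C (.of_forall hC)

theorem memLp_top_inv_of_le {f : Ω → ℝ} (hf : AEMeasurable f μ) {c : ℝ} (hc : 0 < c)
    (h : ∀ᵐ ω ∂μ, c ≤ f ω) : MemLp f⁻¹ ∞ μ :=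
  memLp_top_of_bound hf.inv.aestronglyMeasurable c⁻¹ <| h.mono fun ω hω => by
    rw [Pi.inv_apply, norm_inv, Real.norm_of_nonneg (hc.trans_le hω).le]
    exact inv_anti₀ hc hω

end LInfinity

section DoublyRobust

variable {Ω : Type*} {m m' m₀ : MeasurableSpace Ω} {μ : Measure Ω} [IsFiniteMeasure μ]

theorem integral_doublyRobust_eq (hm : m ≤ m') (hm' : m' ≤ m₀)
    {Y T Z θ₀ f₀ q₀ p₀ r₀ β₀ θ : Ω → ℝ}
    (hY : MemLp Y ∞ μ) (hT : MemLp T ∞ μ) (hZ : MemLp Z ∞ μ) (hθ₀ : MemLp θ₀ ∞ μ)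
    (hf₀ : MemLp f₀ ∞ μ) (hq₀ : MemLp q₀ ∞ μ) (hp₀ : MemLp p₀ ∞ μ) (hr₀ : MemLp r₀ ∞ μ)
    (hθ : MemLp θ ∞ μ) (hβ₀inv : MemLp β₀⁻¹ ∞ μ)
    (hZm : Measurable[m'] Z) (hθ₀m : Measurable[m] θ₀) (hf₀m : Measurable[m] f₀)
    (hq₀m : Measurable[m] q₀) (hp₀m : Measurable[m] p₀) (hr₀m : Measurable[m] r₀)
    (hβ₀m : Measurable[m] β₀) (hθm : Measurable[m] θ)
    (hIV : μ[fun ω => Y ω - θ₀ ω * T ω - f₀ ω | m'] =ᵐ[μ] 0)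
    (hZr₀ : μ[Z | m] =ᵐ[μ] r₀)
    (hβ₀ : μ[fun ω => (T ω - p₀ ω) * (Z ω - r₀ ω) | m] =ᵐ[μ] β₀)
    (hβ₀ne : ∀ᵐ ω ∂μ, β₀ ω ≠ 0) :
    ∫ ω, (θ ω + (Y ω - q₀ ω - θ ω * (T ω - p₀ ω)) * (Z ω - r₀ ω) / β₀ ω) ∂μ =
      ∫ ω, θ₀ ω ∂μ := by
  have hm₀ : m ≤ m₀ := hm.trans hm'
  have hR : MemLp (Z - r₀) ∞ μ := hZ.sub hr₀
  have hε : MemLp (Y - θ₀ * T - f₀) ∞ μ := (hY.sub (hT.mul hθ₀)).sub hf₀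
  have hDR : MemLp ((T - p₀) * (Z - r₀)) ∞ μ := hR.mul (hT.sub hp₀)
  set w := (Z - r₀) * β₀⁻¹
  set g := (θ₀ - θ) * β₀⁻¹
  set c := (θ₀ * p₀ + f₀ - q₀) * β₀⁻¹
  have hw : MemLp w ∞ μ := hβ₀inv.mul hR
  have hg : MemLp g ∞ μ := hβ₀inv.mul (hθ₀.sub hθ)
  have hc : MemLp c ∞ μ := hβ₀inv.mul (((hp₀.mul hθ₀).add hf₀).sub hq₀)
  have hwm : Measurable[m'] w := (hZm.sub (hr₀m.mono hm le_rfl)).mul (hβ₀m.mono hm le_rfl).inv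
  have hgm : Measurable[m] g := (hθ₀m.sub hθm).mul hβ₀m.inv
  have hcm : Measurable[m] c := (((hθ₀m.mul hp₀m).add hf₀m).sub hq₀m).mul hβ₀m.inv
  have hsplit : (fun ω => θ ω + (Y ω - q₀ ω - θ ω * (T ω - p₀ ω)) * (Z ω - r₀ ω) / β₀ ω) =
      θ + (w * (Y - θ₀ * T - f₀) + (g * ((T - p₀) * (Z - r₀)) + c * (Z - r₀))) := by
    ext ω
    simp only [w, g, c, Pi.mul_apply, Pi.sub_apply, Pi.add_apply, Pi.inv_apply]
    ring
  have hwεi : Integrable (w * (Y - θ₀ * T - f₀)) μ := (hε.mul hw).integrable le_top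
  have hgDRi : Integrable (g * ((T - p₀) * (Z - r₀))) μ := (hDR.mul hg).integrable le_top
  have hcRi : Integrable (c * (Z - r₀)) μ := (hR.mul hc).integrable le_top
  have hwε : ∫ ω, (w * (Y - θ₀ * T - f₀)) ω ∂μ = 0 :=
    integral_mul_eq_zero_of_condExp_ae_eq_zero hm' hwm.aestronglyMeasurable hwεi
      (hε.integrable le_top) hIV
  have hgDR : ∫ ω, (g * ((T - p₀) * (Z - r₀))) ω ∂μ = ∫ ω, θ₀ ω - θ ω ∂μ :=
    (integral_mul_eq_integral_mul_of_condExp_ae_eq hm₀ hgm.aestronglyMeasurable hgDRi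
      (hDR.integrable le_top) hβ₀).trans <| integral_congr_ae <| hβ₀ne.mono fun ω hω => by
        simp only [g, Pi.mul_apply, Pi.sub_apply, Pi.inv_apply, inv_mul_cancel_right₀ hω]
  have hcR : ∫ ω, (c * (Z - r₀)) ω ∂μ = 0 :=
    integral_mul_eq_zero_of_condExp_ae_eq_zero hm₀ hcm.aestronglyMeasurable hcRi
      (hR.integrable le_top) (condExp_sub_ae_eq_zero_of_condExp_ae_eq hm₀
        (hZ.integrable le_top) (hr₀.integrable le_top) hr₀m.stronglyMeasurable hZr₀)
  have hθi : Integrable θ μ := hθ.integrable le_top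
  rw [hsplit, integral_add' hθi (hwεi.add (hgDRi.add hcRi)),
    integral_add' hwεi (hgDRi.add hcRi), integral_add' hgDRi hcRi, hwε, hgDR, hcR,
    integral_sub (hθ₀.integrable le_top) hθi]
  ring

end DoublyRobust

theorem stmt_10_general
    {Ω 𝓧 : Type*} [MeasurableSpace Ω] [MeasurableSpace 𝓧]
    (μ : Measure Ω) [IsProbabilityMeasure μ]
    (Y T Z : Ω → ℝ) (X : Ω → 𝓧)
    (hY : Measurable Y) (hT : Measurable T) (hZ : Measurable Z) (hX : Measurable X)
    (hYbdd : ∃ C, ∀ ω, |Y ω| ≤ C) (hTbdd : ∃ C, ∀ ω, |T ω| ≤ C)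
    (hZbdd : ∃ C, ∀ ω, |Z ω| ≤ C)
    (θ0 f0 : 𝓧 → ℝ) (hθ0m : Measurable θ0) (hf0m : Measurable f0)
    (hθ0bdd : ∃ C, ∀ x, |θ0 x| ≤ C) (hf0bdd : ∃ C, ∀ x, |f0 x| ≤ C)
    (hIV : μ[fun ω => Y ω - θ0 (X ω) * T ω - f0 (X ω) |
        MeasurableSpace.comap (fun ω => (Z ω, X ω)) inferInstance] =ᵐ[μ] 0)
    (q0 p0 r0 : 𝓧 → ℝ) (hq0m : Measurable q0) (hp0m : Measurable p0) (hr0m : Measurable r0)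
    (hq0bdd : ∃ C, ∀ x, |q0 x| ≤ C) (hp0bdd : ∃ C, ∀ x, |p0 x| ≤ C)
    (hr0bdd : ∃ C, ∀ x, |r0 x| ≤ C)
    (hr0 : (fun ω => r0 (X ω)) =ᵐ[μ] μ[Z | MeasurableSpace.comap X inferInstance])
    (β0 : 𝓧 → ℝ) (hβ0m : Measurable β0)
    (hβ0 : (fun ω => β0 (X ω)) =ᵐ[μ]
        μ[fun ω => (T ω - p0 (X ω)) * (Z ω - r0 (X ω)) | MeasurableSpace.comap X inferInstance])
    (βmin : ℝ) (hβmin : 0 < βmin) (hβlb : ∀ᵐ ω ∂μ, βmin ≤ β0 (X ω))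
    (θpre : 𝓧 → ℝ) (hθprem : Measurable θpre) (hθprebdd : ∃ C, ∀ x, |θpre x| ≤ C) :
    (∫ ω, (θpre (X ω)
        + (Y ω - q0 (X ω) - θpre (X ω) * (T ω - p0 (X ω))) * (Z ω - r0 (X ω)) / β0 (X ω)) ∂μ)
      = ∫ ω, θ0 (X ω) ∂μ := by
  have hZXm : Measurable[MeasurableSpace.comap (fun ω => (Z ω, X ω)) inferInstance]
      (fun ω => (Z ω, X ω)) := comap_measurable _
  have hXm : Measurable[MeasurableSpace.comap X inferInstance] X := comap_measurable X
  have hmemLp {g : 𝓧 → ℝ} (hg : Measurable g) (h : ∃ C, ∀ x, |g x| ≤ C) :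
      MemLp (fun ω => g (X ω)) ∞ μ :=
    memLp_top_of_abs_le (hg.comp hX).aestronglyMeasurable (h.imp fun _ hC _ => hC _)
  exact integral_doublyRobust_eq (measurable_snd.comp hZXm).comap_le (hZ.prodMk hX).comap_le
    (memLp_top_of_abs_le hY.aestronglyMeasurable hYbdd)
    (memLp_top_of_abs_le hT.aestronglyMeasurable hTbdd)
    (memLp_top_of_abs_le hZ.aestronglyMeasurable hZbdd)
    (hmemLp hθ0m hθ0bdd) (hmemLp hf0m hf0bdd) (hmemLp hq0m hq0bdd) (hmemLp hp0m hp0bdd)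
    (hmemLp hr0m hr0bdd) (hmemLp hθprem hθprebdd)
    (memLp_top_inv_of_le (hβ0m.comp hX).aemeasurable hβmin hβlb)
    (measurable_fst.comp hZXm) (hθ0m.comp hXm) (hf0m.comp hXm) (hq0m.comp hXm) (hp0m.comp hXm)
    (hr0m.comp hXm) (hβ0m.comp hXm) (hθprem.comp hXm) hIV hr0.symm hβ0.symm
    (hβlb.mono fun _ h => (hβmin.trans_le h).ne')

theorem stmt_10
    {Ω 𝓧 : Type*} [MeasurableSpace Ω] [MeasurableSpace 𝓧] [StandardBorelSpace 𝓧]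
    (μ : Measure Ω) [IsProbabilityMeasure μ]
    (Y T Z : Ω → ℝ) (X : Ω → 𝓧)
    (hY : Measurable Y) (hT : Measurable T) (hZ : Measurable Z) (hX : Measurable X)
    (hYbdd : ∃ C, ∀ ω, |Y ω| ≤ C) (hTbdd : ∃ C, ∀ ω, |T ω| ≤ C)
    (hZbdd : ∃ C, ∀ ω, |Z ω| ≤ C)
    (θ0 f0 : 𝓧 → ℝ) (hθ0m : Measurable θ0) (hf0m : Measurable f0)
    (hθ0bdd : ∃ C, ∀ x, |θ0 x| ≤ C) (hf0bdd : ∃ C, ∀ x, |f0 x| ≤ C)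
    (hIV : μ[fun ω => Y ω - θ0 (X ω) * T ω - f0 (X ω) |
        MeasurableSpace.comap (fun ω => (Z ω, X ω)) inferInstance] =ᵐ[μ] 0)
    (q0 p0 r0 : 𝓧 → ℝ) (hq0m : Measurable q0) (hp0m : Measurable p0) (hr0m : Measurable r0)
    (hq0bdd : ∃ C, ∀ x, |q0 x| ≤ C) (hp0bdd : ∃ C, ∀ x, |p0 x| ≤ C)
    (hr0bdd : ∃ C, ∀ x, |r0 x| ≤ C)
    (hq0 : (fun ω => q0 (X ω)) =ᵐ[μ] μ[Y | MeasurableSpace.comap X inferInstance])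
    (hp0 : (fun ω => p0 (X ω)) =ᵐ[μ] μ[T | MeasurableSpace.comap X inferInstance])
    (hr0 : (fun ω => r0 (X ω)) =ᵐ[μ] μ[Z | MeasurableSpace.comap X inferInstance])
    (h0 : ℝ × 𝓧 → ℝ) (hh0m : Measurable h0) (hh0bdd : ∃ C, ∀ zx, |h0 zx| ≤ C)
    (hh0 : (fun ω => h0 (Z ω, X ω)) =ᵐ[μ]
        μ[T | MeasurableSpace.comap (fun ω => (Z ω, X ω)) inferInstance])
    (β0 : 𝓧 → ℝ) (hβ0m : Measurable β0) (hβ0bdd : ∃ C, ∀ x, |β0 x| ≤ C)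
    (hβ0 : (fun ω => β0 (X ω)) =ᵐ[μ]
        μ[fun ω => (T ω - p0 (X ω)) * (Z ω - r0 (X ω)) | MeasurableSpace.comap X inferInstance])
    (V0 : 𝓧 → ℝ) (hV0m : Measurable V0) (hV0bdd : ∃ C, ∀ x, |V0 x| ≤ C)
    (hV0 : (fun ω => V0 (X ω)) =ᵐ[μ]
        μ[fun ω => (h0 (Z ω, X ω) - p0 (X ω)) ^ 2 | MeasurableSpace.comap X inferInstance])
    (βmin : ℝ) (hβmin : 0 < βmin) (hβlb : ∀ᵐ ω ∂μ, βmin ≤ β0 (X ω))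
    (θpre : 𝓧 → ℝ) (hθprem : Measurable θpre) (hθprebdd : ∃ C, ∀ x, |θpre x| ≤ C) :
    (∫ ω, (θpre (X ω)
        + (Y ω - q0 (X ω) - θpre (X ω) * (T ω - p0 (X ω))) * (Z ω - r0 (X ω)) / β0 (X ω)) ∂μ)
      = ∫ ω, θ0 (X ω) ∂μ :=
  stmt_10_general μ Y T Z X hY hT hZ hX hYbdd hTbdd hZbdd θ0 f0 hθ0m hf0m hθ0bdd hf0bdd hIV q0 p0 r0
    hq0m hp0m hr0m hq0bdd hp0bdd hr0bdd hr0 β0 hβ0m hβ0 βmin hβmin hβlb θpre hθprem hθprebdd
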